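/- Let E fit in 0 → E → F → O_l(r) ⊕ O_W → 0 as in the construction of X(n,s), with E and F stable (hence simple). Then h^1(Hom(E,E)) = 1 + 2r + s + h^1(Hom(F,F)) and h^2(Hom(E,E)) = 0. -/

import Mathlib

open Module

theorem Function.Exact.subsingleton {U V W : Type*} [Zero W] [Subsingleton U] [Subsingleton W]
    {f : U → V} {g : V → W} (h : Function.Exact f g) : Subsingleton V := by
  refine ⟨fun v v' => ?_⟩
  obtain ⟨u, rfl⟩ := (h v).mp (Subsingleton.elim _ _)
  obtain ⟨u', rfl⟩ := (h v').mp (Subsingleton.elim _ _)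
  rw [Subsingleton.elim u u']

theorem h1_h2_of_sheaf_hom_EE_general
    {k : Type*} [Field k] (r s : ℕ)
    (H0A H0B H0C H1A H1B H1C H2A H2B : Type*)
    [AddCommGroup H0A] [AddCommGroup H0B] [AddCommGroup H0C] [AddCommGroup H1A]
    [AddCommGroup H1B] [AddCommGroup H1C] [AddCommGroup H2A] [AddCommGroup H2B]
    [Module k H0A] [Module k H0B] [Module k H0C] [Module k H1A]
    [Module k H1B] [Module k H1C] [Module k H2A] [Module k H2B]
    [FiniteDimensional k H0A] [FiniteDimensional k H0B] [FiniteDimensional k H0C]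
    [FiniteDimensional k H1A] [FiniteDimensional k H1B] [FiniteDimensional k H1C]
    (a1 : H0A →ₗ[k] H0B) (a2 : H0B →ₗ[k] H0C) (a3 : H0C →ₗ[k] H1A)
    (a4 : H1A →ₗ[k] H1B) (a5 : H1B →ₗ[k] H1C) (a6 : H1C →ₗ[k] H2A)
    (a7 : H2A →ₗ[k] H2B)
    (h1 : Function.Injective a1)
    (e12 : Function.Exact a1 a2) (e23 : Function.Exact a2 a3)
    (e34 : Function.Exact a3 a4) (e45 : Function.Exact a4 a5)
    (e67 : Function.Exact a6 a7)
    (hA0 : finrank k H0A = 1)            -- E is simple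
    (hB0 : finrank k H0B = 1)            -- F is simple
    (hC0 : finrank k H0C = 2 * r + 1 + s)  -- h⁰(O_l(2r) ⊕ O_W)
    (hC1 : Subsingleton H1C)             -- h¹(O_l(2r) ⊕ O_W) = 0
    (hB2 : Subsingleton H2B) :           -- h²(Hom(F,F)) = 0 (Lemma 2)
    finrank k H1A = 1 + 2 * r + s + finrank k H1B ∧ finrank k H2A = 0 := by
  have hC1_finrank : finrank k H1C = 0 := finrank_zero_of_subsingleton
  -- `H¹C = 0` makes `a5` onto, so `0 → H⁰A → ⋯ → H¹B → H¹C → 0` is exact.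
  have euler := sum_neg_one_pow_finrank_eq_zero_of_exact_six a1 a2 a3 a4 a5 h1 e12 e23 e34 e45
    (Function.surjective_to_subsingleton a5)
  have hA2 : Subsingleton H2A := e67.subsingleton
  exact ⟨by omega, finrank_zero_of_subsingleton⟩

/-- For E as in the construction of X(n,s), with E and F stable (hence
simple): h¹(Hom(E,E)) = 1 + 2r + s + h¹(Hom(F,F)) and h²(Hom(E,E)) = 0.
From 0 → Hom(E,E) → Hom(F,F) → O_l(2r) ⊕ O_W → 0 one gets the long exact cohomology
sequence 0 → H⁰A → H⁰B → H⁰C → H¹A → H¹B → H¹C → H²A → H²B with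
A = Hom(E,E), B = Hom(F,F), C = O_l(2r) ⊕ O_W; simplicity gives h⁰A = h⁰B = 1,
h⁰C = 2r+1+s, h¹C = 0 (r ≥ 0), and h²B = 0 by Lemma 2. -/
theorem h1_h2_of_sheaf_hom_EE
    {k : Type*} [Field k] (r s : ℕ)
    (H0A H0B H0C H1A H1B H1C H2A H2B : Type*)
    [AddCommGroup H0A] [AddCommGroup H0B] [AddCommGroup H0C] [AddCommGroup H1A]
    [AddCommGroup H1B] [AddCommGroup H1C] [AddCommGroup H2A] [AddCommGroup H2B]
    [Module k H0A] [Module k H0B] [Module k H0C] [Module k H1A]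
    [Module k H1B] [Module k H1C] [Module k H2A] [Module k H2B]
    [FiniteDimensional k H0A] [FiniteDimensional k H0B] [FiniteDimensional k H0C]
    [FiniteDimensional k H1A] [FiniteDimensional k H1B] [FiniteDimensional k H1C]
    [FiniteDimensional k H2A] [FiniteDimensional k H2B]
    (a1 : H0A →ₗ[k] H0B) (a2 : H0B →ₗ[k] H0C) (a3 : H0C →ₗ[k] H1A)
    (a4 : H1A →ₗ[k] H1B) (a5 : H1B →ₗ[k] H1C) (a6 : H1C →ₗ[k] H2A)
    (a7 : H2A →ₗ[k] H2B)
    (h1 : Function.Injective a1)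
    (e12 : Function.Exact a1 a2) (e23 : Function.Exact a2 a3)
    (e34 : Function.Exact a3 a4) (e45 : Function.Exact a4 a5)
    (e56 : Function.Exact a5 a6) (e67 : Function.Exact a6 a7)
    (hA0 : finrank k H0A = 1)            -- E is simple
    (hB0 : finrank k H0B = 1)            -- F is simple
    (hC0 : finrank k H0C = 2 * r + 1 + s)  -- h⁰(O_l(2r) ⊕ O_W)
    (hC1 : Subsingleton H1C)             -- h¹(O_l(2r) ⊕ O_W) = 0
    (hB2 : Subsingleton H2B) :           -- h²(Hom(F,F)) = 0 (Lemma 2)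
    finrank k H1A = 1 + 2 * r + s + finrank k H1B ∧ finrank k H2A = 0 :=
  h1_h2_of_sheaf_hom_EE_general r s H0A H0B H0C H1A H1B H1C H2A H2B a1 a2 a3 a4 a5 a6 a7 h1 e12 e23
    e34 e45 e67 hA0 hB0 hC0 hC1 hB2
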